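/- Let p be a prime and q = p^t for some t ≥ 0. Then for every S ⊆ [q-1], β_q(S) ≡ (-1)^{|S|} (mod p). -/

import Mathlib

open Finset

/-- The descent set of a permutation of `{1,…,n}` (written as a permutation of `Fin n`),
as a subset of `[n-1] = {1,…,n-1}`: `i` is a descent if `π_i > π_{i+1}` (1-indexed). -/
def descSet (n : ℕ) (π : Equiv.Perm (Fin n)) : Finset ℕ :=
  (Finset.Icc 1 (n - 1)).filter (fun i =>
    ∃ h : i < n, π ⟨i, h⟩ < π ⟨i - 1, by omega⟩)

/-- `β_n(S)`: the number of permutations of `{1,…,n}` with descent set exactly `S`. -/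
def descBeta (n : ℕ) (S : Finset ℕ) : ℕ :=
  (Finset.univ.filter (fun π : Equiv.Perm (Fin n) => descSet n π = S)).card

/-- `α_n(S)`: the number of permutations of `{1,…,n}` with descent set contained in `S`. -/
def descAlpha (n : ℕ) (S : Finset ℕ) : ℕ :=
  (Finset.univ.filter (fun π : Equiv.Perm (Fin n) => descSet n π ⊆ S)).card

/-! Summing `β_q` over the subsets of `T` gives `α_q(T)`. For `m ∈ T`, the fibres of
`π ↦ π {i | i < m}` over the `m`-subsets of `Fin q` all have the same size, because relabelling the
values of `π` by a permutation that is increasing on the fibre's image and on its complement can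
only create a descent at `m`. So `(q choose m) ∣ α_q(T)`, and for `q = p ^ t`, `0 < m < q` this
binomial coefficient is divisible by `p`. Hence `α_q(T) ≡ [T = ∅] = ∑_{R ⊆ T} (-1)^{|R|} (mod p)`,
and the triangular system `α = ∑ β` determines `β_q(S) ≡ (-1)^{|S|}` uniquely. -/

namespace Finset

theorem eq_of_forall_sum_powerset_eq {α M : Type*} [DecidableEq α] [AddCancelCommMonoid M]
    {f g : Finset α → M} {S : Finset α}
    (h : ∀ T ⊆ S, ∑ R ∈ T.powerset, f R = ∑ R ∈ T.powerset, g R) : f S = g S := by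
  induction S using Finset.strongInduction with
  | H S ih =>
    have h_proper : ∀ R ∈ S.powerset.erase S, f R = g R := fun R hR => by
      rw [mem_erase, mem_powerset] at hR
      exact ih R (hR.2.ssubset_of_ne hR.1) fun T hT => h T (hT.trans hR.2)
    have hS := h S subset_rfl
    rw [← add_sum_erase _ f (mem_powerset_self S), ← add_sum_erase _ g (mem_powerset_self S),
      sum_congr rfl h_proper] at hS
    exact add_right_cancel hS

theorem card_dvd_card_of_fiber_card_le {ι κ : Type*} [DecidableEq κ] {s : Finset ι}
    {t : Finset κ} {f : ι → κ} (hf : ∀ a ∈ s, f a ∈ t)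
    (h : ∀ b ∈ t, ∀ b' ∈ t, #{a ∈ s | f a = b} ≤ #{a ∈ s | f a = b'}) : #t ∣ #s := by
  rcases t.eq_empty_or_nonempty with rfl | ⟨b₀, hb₀⟩
  · simp [card_eq_sum_card_fiberwise hf]
  · rw [card_eq_sum_card_fiberwise hf,
      sum_congr rfl fun b hb => le_antisymm (h b hb b₀ hb₀) (h b₀ hb₀ b hb), sum_const, smul_eq_mul]
    exact dvd_mul_right _ _

end Finset

theorem Fin.exists_perm_strictMono_on_and_compl {n : ℕ} {A B : Finset (Fin n)} (h : #A = #B) :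
    ∃ σ : Equiv.Perm (Fin n), (∀ x, σ x ∈ B ↔ x ∈ A) ∧
      ∀ x y, (x ∈ A ↔ y ∈ A) → (σ x < σ y ↔ x < y) := by
  let e : {x // x ∈ A} ≃o {x // x ∈ B} :=
    (Fintype.orderIsoFinOfCardEq _ (k := #A) (by simp)).symm.trans
      (Fintype.orderIsoFinOfCardEq _ (by simp [h]))
  let e' : {x // x ∉ A} ≃o {x // x ∉ B} :=
    (Fintype.orderIsoFinOfCardEq _ (k := n - #A) (by simp [Fintype.card_subtype_compl])).symm.trans
      (Fintype.orderIsoFinOfCardEq _ (by simp [Fintype.card_subtype_compl, h]))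
  let σ := Equiv.subtypeCongr e.toEquiv e'.toEquiv
  have hσA : ∀ x (hx : x ∈ A), σ x = e ⟨x, hx⟩ := fun x hx => by
    simp [σ, Equiv.subtypeCongr, Equiv.sumCompl_symm_apply_of_pos hx]
  have hσAc : ∀ x (hx : x ∉ A), σ x = e' ⟨x, hx⟩ := fun x hx => by
    simp [σ, Equiv.subtypeCongr, Equiv.sumCompl_symm_apply_of_neg hx]
  refine ⟨σ, fun x => ?_, fun x y hxy => ?_⟩
  · by_cases hx : x ∈ A
    · simp [hσA x hx, hx]
    · simpa [hσAc x hx, hx] using (e' ⟨x, hx⟩).2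
  · by_cases hx : x ∈ A
    · rw [hσA x hx, hσA y (hxy.1 hx), Subtype.coe_lt_coe, e.lt_iff_lt, Subtype.mk_lt_mk]
    · have hy : y ∉ A := fun hy => hx (hxy.2 hy)
      rw [hσAc x hx, hσAc y hy, Subtype.coe_lt_coe, e'.lt_iff_lt, Subtype.mk_lt_mk]

theorem mem_descSet {n i : ℕ} {π : Equiv.Perm (Fin n)} :
    i ∈ descSet n π ↔ 1 ≤ i ∧ ∃ h : i < n, π ⟨i, h⟩ < π ⟨i - 1, by omega⟩ := by
  simp only [descSet, mem_filter, mem_Icc]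
  constructor
  · rintro ⟨⟨h1, -⟩, h⟩
    exact ⟨h1, h⟩
  · rintro ⟨h1, hi, h⟩
    exact ⟨⟨h1, by omega⟩, hi, h⟩

theorem descSet_eq_empty_iff {n : ℕ} {π : Equiv.Perm (Fin n)} : descSet n π = ∅ ↔ π = 1 := by
  constructor
  · intro h
    suffices StrictMono π from Equiv.ext fun x => congrFun this.eq_id x
    cases n with
    | zero => exact fun x => x.elim0
    | succ n =>
      refine Fin.strictMono_iff_lt_succ.2 fun i => ?_
      have hi : i.val + 1 ∉ descSet (n + 1) π := by simp [h]
      simp only [mem_descSet, not_and, not_exists, not_lt] at hi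
      exact (hi (by omega) (by omega)).lt_of_ne (π.injective.ne i.castSucc_lt_succ.ne)
  · rintro rfl
    ext i
    simp only [mem_descSet, Equiv.Perm.one_apply, Fin.mk_lt_mk, notMem_empty, iff_false]
    omega

theorem descAlpha_empty (n : ℕ) : descAlpha n ∅ = 1 := by
  simp [descAlpha, subset_empty, descSet_eq_empty_iff, filter_eq']

theorem descAlpha_eq_sum_descBeta (n : ℕ) (T : Finset ℕ) :
    descAlpha n T = ∑ R ∈ T.powerset, descBeta n R := by
  rw [descAlpha, card_eq_sum_card_fiberwise fun π hπ => mem_powerset.2 (mem_filter.1 hπ).2]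
  refine sum_congr rfl fun R hR => congrArg card ?_
  ext π
  simp only [mem_filter, mem_univ, true_and, and_iff_right_iff_imp]
  rintro rfl
  exact mem_powerset.1 hR

theorem descSet_mul_subset_insert {n m : ℕ} {π σ : Equiv.Perm (Fin n)} {A : Finset (Fin n)}
    (hA : ∀ i, π i ∈ A ↔ (i : ℕ) < m) (hσ : ∀ x y, (x ∈ A ↔ y ∈ A) → (σ x < σ y ↔ x < y)) :
    descSet n (σ * π) ⊆ insert m (descSet n π) := by
  intro i hi
  obtain ⟨hi1, hin, hlt⟩ := mem_descSet.1 hi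
  rcases eq_or_ne i m with rfl | him
  · exact mem_insert_self _ _
  · refine mem_insert_of_mem (mem_descSet.2 ⟨hi1, hin, (hσ _ _ ?_).1 hlt⟩)
    simp only [hA]
    omega

theorem choose_dvd_descAlpha {n m : ℕ} {T : Finset ℕ} (hm : m ∈ T) (hmn : m ≤ n) :
    n.choose m ∣ descAlpha n T := by
  let B₀ : Finset (Fin n) := {i | (i : ℕ) < m}
  have hB₀ : #B₀ = m := by simp [B₀, Fin.card_filter_val_lt, hmn]
  have hmem : ∀ π : Equiv.Perm (Fin n), ∀ i, π i ∈ B₀.image π ↔ (i : ℕ) < m := fun π i => by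
    simp [B₀]
  have := card_dvd_card_of_fiber_card_le (s := {π | descSet n π ⊆ T})
    (t := powersetCard m univ) (f := fun π => B₀.image π) ?_ ?_
  · simpa [descAlpha] using this
  · intro π _
    simp [mem_powersetCard, card_image_of_injective _ π.injective, hB₀]
  · intro A hA B hB
    obtain ⟨σ, hσB, hσ⟩ := Fin.exists_perm_strictMono_on_and_compl
      ((mem_powersetCard.1 hA).2.trans (mem_powersetCard.1 hB).2.symm)
    refine card_le_card_of_injOn (σ * ·) (fun π hπ => ?_) (mul_right_injective σ).injOn
    simp only [coe_filter, mem_filter, mem_univ, true_and, Set.mem_ofPred_eq] at hπ ⊢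
    obtain ⟨hπT, rfl⟩ := hπ
    refine ⟨(descSet_mul_subset_insert (hmem π) hσ).trans (insert_subset hm hπT), ?_⟩
    ext y
    obtain ⟨x, rfl⟩ := (σ * π).surjective y
    rw [(σ * π).injective.mem_finset_image, Equiv.Perm.mul_apply, hσB, hmem]
    simp [B₀]

theorem descAlpha_prime_pow_cast_eq {p t : ℕ} (hp : p.Prime) {T : Finset ℕ}
    (hT : T ⊆ Icc 1 (p ^ t - 1)) :
    (descAlpha (p ^ t) T : ZMod p) = ((∑ R ∈ T.powerset, (-1 : ℤ) ^ #R : ℤ) : ZMod p) := by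
  rw [sum_powerset_neg_one_pow_card]
  split_ifs with hT₀
  · simp [hT₀, descAlpha_empty]
  · obtain ⟨m, hm⟩ := nonempty_iff_ne_empty.2 hT₀
    have hm' := mem_Icc.1 (hT hm)
    rw [Int.cast_zero, ZMod.natCast_eq_zero_iff]
    exact (hp.dvd_choose_pow (by omega) (by omega)).trans (choose_dvd_descAlpha hm (by omega))

/-- For a prime power `q = p^t`, `β_q(S) ≡ (-1)^{|S|} (mod p)`. -/
theorem stmt_12 (p t : ℕ) (hp : p.Prime) (S : Finset ℕ)
    (hS : S ⊆ Finset.Icc 1 (p ^ t - 1)) :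
    (descBeta (p ^ t) S : ℤ) ≡ (-1) ^ S.card [ZMOD p] := by
  rw [← ZMod.intCast_eq_intCast_iff, Int.cast_natCast]
  refine eq_of_forall_sum_powerset_eq (f := fun R => (descBeta (p ^ t) R : ZMod p))
    (g := fun R => (((-1 : ℤ) ^ #R : ℤ) : ZMod p)) fun T hT => ?_
  rw [← Nat.cast_sum, ← descAlpha_eq_sum_descBeta, ← Int.cast_sum]
  exact descAlpha_prime_pow_cast_eq hp (hT.trans hS)
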